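/- arXiv:0912.3891 — 2 statements merged into one kernel-verified Lean document; each statement's English description precedes it below -/
import Mathlib

section
/- Suppose min_k π_k ≥ λ > 0 and there are constants C₃ > 0 and β > 0 such that N^{-1} Σ_{k∈U} (Y_k(t) − Y_k(s))² ≤ C₃|t−s|^{2β} for all s,t ∈ [0,T]. Then there exists a constant C₆ depending only on C₃ such that, for every possible sample s and every t ∈ [0,T], |μ̂_d(t) − μ̂_N(t)| ≤ (C₆/λ) · max_{1≤i≤d−1} |t_{i+1} − t_i|^β. -/
open Finset MeasureTheory ProbabilityTheory Filter Topology

noncomputable section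

/-- Expectation of `f` under a sampling design `p` on the population `{0, …, N-1}`. -/
def dExp (N : ℕ) (p : Finset ℕ → ℝ) (f : Finset ℕ → ℝ) : ℝ :=
  ∑ s ∈ (Finset.range N).powerset, p s * f s

/-- Variance of `f` under the sampling design `p`. -/
def dVar (N : ℕ) (p : Finset ℕ → ℝ) (f : Finset ℕ → ℝ) : ℝ :=
  dExp N p (fun s => f s ^ 2) - dExp N p f ^ 2

/-- `p` is a fixed-size-`n` sampling design on the population `{0, …, N-1}`. -/
structure IsDesign (N n : ℕ) (p : Finset ℕ → ℝ) : Prop where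
  nonneg : ∀ s, 0 ≤ p s
  sum_one : ∑ s ∈ (Finset.range N).powerset, p s = 1
  supp : ∀ s, p s ≠ 0 → s ⊆ Finset.range N ∧ s.card = n

/-- First-order inclusion probability `π_k`. -/
def pi1 (N : ℕ) (p : Finset ℕ → ℝ) (k : ℕ) : ℝ :=
  dExp N p fun s => if k ∈ s then 1 else 0

/-- Second-order inclusion probability `π_{kl}` (it equals `π_k` on the diagonal). -/
def pi2 (N : ℕ) (p : Finset ℕ → ℝ) (k l : ℕ) : ℝ :=
  dExp N p fun s => if k ∈ s ∧ l ∈ s then 1 else 0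

/-- `Δ_{kl} = π_{kl} - π_k π_l`; on the diagonal it equals `π_k (1 - π_k)`. -/
def Delta (N : ℕ) (p : Finset ℕ → ℝ) (k l : ℕ) : ℝ :=
  pi2 N p k l - pi1 N p k * pi1 N p l

/-- Sample membership indicator `I_k`. -/
def ind (k : ℕ) (s : Finset ℕ) : ℝ := if k ∈ s then 1 else 0

/-- Population mean trajectory `μ_N`. -/
def popMean (N : ℕ) (Y : ℕ → ℝ → ℝ) (t : ℝ) : ℝ :=
  (N : ℝ)⁻¹ * ∑ k ∈ Finset.range N, Y k t

/-- Horvitz–Thompson estimator of the mean curve computed from the sample `s`. -/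
def htMean (N : ℕ) (p : Finset ℕ → ℝ) (Y : ℕ → ℝ → ℝ) (s : Finset ℕ) (t : ℝ) : ℝ :=
  (N : ℝ)⁻¹ * ∑ k ∈ s, Y k t / pi1 N p k

/-- Covariance function `γ_N(u,v)` of the Horvitz–Thompson estimator under the design. -/
def htCov (N : ℕ) (p : Finset ℕ → ℝ) (Y : ℕ → ℝ → ℝ) (u v : ℝ) : ℝ :=
  dExp N p (fun s => htMean N p Y s u * htMean N p Y s v) -
    dExp N p (fun s => htMean N p Y s u) * dExp N p (fun s => htMean N p Y s v)

/-- Horvitz–Thompson covariance estimator `γ̂(u,v)`. -/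
def htCovEst (N : ℕ) (p : Finset ℕ → ℝ) (Y : ℕ → ℝ → ℝ) (s : Finset ℕ) (u v : ℝ) : ℝ :=
  ((N : ℝ) ^ 2)⁻¹ * ∑ k ∈ s, ∑ l ∈ s,
    Y k u / pi1 N p k * (Y l v / pi1 N p l) * (Delta N p k l / pi2 N p k l)

/-- Mesh (largest gap) of a discretization grid `pts` with `d` subintervals. -/
def meshR (d : ℕ) (hd : 0 < d) (pts : Fin (d + 1) → ℝ) : ℝ :=
  Finset.univ.sup' (⟨⟨0, hd⟩, Finset.mem_univ _⟩ : (Finset.univ : Finset (Fin d)).Nonempty)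
    fun i : Fin d => |pts i.succ - pts i.castSucc|

/-! On the grid cell `[t_i, t_{i+1}]` containing `t`, the interpolation error of each trajectory
is at most `|Y_k(t) - Y_k(t_i)| + |Y_k(t_{i+1}) - Y_k(t_i)|`. Dividing by `π_k ≥ λ` and enlarging the
sample to the whole population bounds the estimator error by `λ⁻¹` times the population means of
these two increments, and by Cauchy–Schwarz each mean is at most `√C₃ · mesh ^ β`; so `C₆ = 2√C₃`. -/

theorem mean_abs_le_of_mean_sq_le {ι : Type*} (s : Finset ι) (f : ι → ℝ) {B : ℝ} (hB : 0 ≤ B)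
    (h : (∑ i ∈ s, f i ^ 2) / #s ≤ B ^ 2) :
    (∑ i ∈ s, |f i|) / #s ≤ B := by
  refine abs_le_of_sq_le_sq' ?_ hB |>.2
  calc ((∑ i ∈ s, |f i|) / #s) ^ 2 ≤ (∑ i ∈ s, |f i| ^ 2) / #s :=
        sum_div_card_sq_le_sum_sq_div_card
    _ = (∑ i ∈ s, f i ^ 2) / #s := by simp only [sq_abs]
    _ ≤ B ^ 2 := h

theorem exists_mem_Icc_castSucc_succ {α : Type*} [LinearOrder α] {d : ℕ} (hd : 0 < d)
    (f : Fin (d + 1) → α) {t : α} (ht : t ∈ Set.Icc (f 0) (f (Fin.last d))) :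
    ∃ i : Fin d, t ∈ Set.Icc (f i.castSucc) (f i.succ) := by
  by_contra! h
  simp only [Set.mem_Icc, not_and, not_le] at h
  obtain ⟨d, rfl⟩ := Nat.exists_eq_add_one_of_ne_zero hd.ne'
  have below : ∀ i : Fin (d + 2), f i ≤ t := fun i => Fin.induction ht.1 (fun i hi => (h i hi).le) i
  exact (h (Fin.last d) (below _)).not_ge ht.2

theorem abs_sub_le_meshR {d : ℕ} (hd : 0 < d) (pts : Fin (d + 1) → ℝ) (i : Fin d) :
    |pts i.succ - pts i.castSucc| ≤ meshR d hd pts :=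
  Finset.le_sup' (fun j : Fin d => |pts j.succ - pts j.castSucc|) (Finset.mem_univ i)

theorem abs_linearInterp_sub_le (y : ℝ → ℝ) {a b t : ℝ} (ht : t ∈ Set.Icc a b) :
    |y a + (y b - y a) / (b - a) * (t - a) - y t| ≤ |y t - y a| + |y b - y a| := by
  have hfrac : |(t - a) / (b - a)| ≤ 1 := by
    rw [abs_of_nonneg (div_nonneg (by linarith [ht.1]) (by linarith [ht.1.trans ht.2]))]
    exact div_le_one_of_le₀ (by linarith [ht.2]) (by linarith [ht.1.trans ht.2])
  calc |y a + (y b - y a) / (b - a) * (t - a) - y t|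
      = |-(y t - y a) + (y b - y a) * ((t - a) / (b - a))| := by ring_nf
    _ ≤ |y t - y a| + |y b - y a| * |(t - a) / (b - a)| := by
        rw [← abs_mul, ← abs_neg (y t - y a)]
        exact abs_add_le _ _
    _ ≤ |y t - y a| + |y b - y a| := by
        gcongr
        exact mul_le_of_le_one_right (abs_nonneg _) hfrac

theorem htMean_sub (N : ℕ) (p : Finset ℕ → ℝ) (Y Z : ℕ → ℝ → ℝ) (s : Finset ℕ) (t : ℝ) :
    htMean N p Z s t - htMean N p Y s t = htMean N p (fun k u => Z k u - Y k u) s t := by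
  simp only [htMean, ← mul_sub, ← Finset.sum_sub_distrib, sub_div]

theorem abs_htMean_le {N : ℕ} {p : Finset ℕ → ℝ} {lam : ℝ} (hlam : 0 < lam)
    (hpi : ∀ k ∈ range N, lam ≤ pi1 N p k) (Y : ℕ → ℝ → ℝ) {s : Finset ℕ} (hs : s ⊆ range N)
    (t : ℝ) :
    |htMean N p Y s t| ≤ lam⁻¹ * ((N : ℝ)⁻¹ * ∑ k ∈ range N, |Y k t|) := by
  calc |htMean N p Y s t| ≤ (N : ℝ)⁻¹ * ∑ k ∈ s, |Y k t / pi1 N p k| := by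
        rw [htMean, abs_mul, abs_of_nonneg (by positivity)]
        gcongr
        exact Finset.abs_sum_le_sum_abs _ _
    _ ≤ (N : ℝ)⁻¹ * ∑ k ∈ s, lam⁻¹ * |Y k t| := by
        gcongr with k hk
        have hk := hpi k (hs hk)
        rw [abs_div, abs_of_pos (hlam.trans_le hk), div_eq_mul_inv, mul_comm]
        gcongr
    _ ≤ (N : ℝ)⁻¹ * ∑ k ∈ range N, lam⁻¹ * |Y k t| := by gcongr
    _ = lam⁻¹ * ((N : ℝ)⁻¹ * ∑ k ∈ range N, |Y k t|) := by rw [← Finset.mul_sum]; ring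

theorem mean_abs_sub_le_of_mean_sq_sub_le {N : ℕ} {Y : ℕ → ℝ → ℝ} {C β u v : ℝ} (hC : 0 ≤ C)
    (h : (N : ℝ)⁻¹ * ∑ k ∈ range N, (Y k v - Y k u) ^ 2 ≤ C * |v - u| ^ (2 * β)) :
    (N : ℝ)⁻¹ * ∑ k ∈ range N, |Y k v - Y k u| ≤ √C * |v - u| ^ β := by
  have key := mean_abs_le_of_mean_sq_le (range N) (fun k => Y k v - Y k u)
    (B := √C * |v - u| ^ β) (by positivity)
  simp only [card_range, ← inv_mul_eq_div] at key
  refine key (h.trans_eq ?_)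
  rw [mul_pow, Real.sq_sqrt hC, ← Real.rpow_natCast, ← Real.rpow_mul (abs_nonneg _)]
  norm_num [mul_comm]

/-- interpolation error of the discretized Horvitz–Thompson estimator:
there is a constant `C₆` depending only on `C₃` such that for every possible sample `s`
and every `t ∈ [0,T]`, `|μ̂_d(t) - μ̂_N(t)| ≤ (C₆/λ) · max_i |t_{i+1} - t_i| ^ β`. -/
theorem discretization_error_bound (C₃ : ℝ) (hC₃ : 0 < C₃) :
    ∃ C₆ : ℝ, 0 < C₆ ∧
      ∀ (T : ℝ), 0 < T → ∀ (β : ℝ), 0 < β →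
      ∀ (N n : ℕ) (Y : ℕ → ℝ → ℝ) (p : Finset ℕ → ℝ), IsDesign N n p →
      (∀ k, ContinuousOn (Y k) (Set.Icc 0 T)) →
      ∀ lam : ℝ, 0 < lam → (∀ k ∈ Finset.range N, lam ≤ pi1 N p k) →
      (∀ s ∈ Set.Icc (0 : ℝ) T, ∀ t ∈ Set.Icc (0 : ℝ) T,
        (N : ℝ)⁻¹ * ∑ k ∈ Finset.range N, (Y k t - Y k s) ^ 2 ≤ C₃ * |t - s| ^ (2 * β)) →
      ∀ (d : ℕ) (hd : 0 < d) (pts : Fin (d + 1) → ℝ), StrictMono pts →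
        pts 0 = 0 → pts (Fin.last d) = T →
      ∀ Ytil : ℕ → ℝ → ℝ,
      (∀ k (i : Fin d), ∀ t ∈ Set.Icc (pts i.castSucc) (pts i.succ),
        Ytil k t = Y k (pts i.castSucc) +
          (Y k (pts i.succ) - Y k (pts i.castSucc)) / (pts i.succ - pts i.castSucc)
            * (t - pts i.castSucc)) →
      ∀ sam : Finset ℕ, p sam ≠ 0 →
      ∀ t ∈ Set.Icc (0 : ℝ) T,
        |htMean N p Ytil sam t - htMean N p Y sam t|
          ≤ C₆ / lam * meshR d hd pts ^ β := by
  refine ⟨2 * √C₃, by positivity, ?_⟩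
  intro T _ β hβ N n Y p hdes _ lam hlam hpi hhol d hd pts hmono hp0 hplast Ytil hYtil sam hsam t ht
  obtain ⟨i, hti⟩ := exists_mem_Icc_castSucc_succ hd pts (by rwa [hp0, hplast])
  set a := pts i.castSucc
  set b := pts i.succ
  set m := meshR d hd pts
  have hgrid : ∀ j, pts j ∈ Set.Icc 0 T := fun j =>
    ⟨hp0 ▸ hmono.monotone (Fin.zero_le j), hplast ▸ hmono.monotone (Fin.le_last j)⟩
  have hba : |b - a| ≤ m := abs_sub_le_meshR hd pts i
  have hta : |t - a| ≤ m := by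
    rw [abs_of_nonneg (sub_nonneg.2 hti.1)]
    exact ((sub_le_sub_right hti.2 a).trans (le_abs_self _)).trans hba
  have hincr : ∀ u ∈ Set.Icc 0 T, ∀ v ∈ Set.Icc 0 T, |v - u| ≤ m →
      (N : ℝ)⁻¹ * ∑ k ∈ range N, |Y k v - Y k u| ≤ √C₃ * m ^ β := fun u hu v hv huv => by
    refine (mean_abs_sub_le_of_mean_sq_sub_le hC₃.le (hhol u hu v hv)).trans ?_
    gcongr
  calc |htMean N p Ytil sam t - htMean N p Y sam t|
      ≤ lam⁻¹ * ((N : ℝ)⁻¹ * ∑ k ∈ range N, |Ytil k t - Y k t|) := by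
        rw [htMean_sub]
        exact abs_htMean_le hlam hpi _ (hdes.supp sam hsam).1 t
    _ ≤ lam⁻¹ * ((N : ℝ)⁻¹ * ∑ k ∈ range N, (|Y k t - Y k a| + |Y k b - Y k a|)) := by
        gcongr with k
        rw [hYtil k i t hti]
        exact abs_linearInterp_sub_le (Y k) hti
    _ ≤ lam⁻¹ * (√C₃ * m ^ β + √C₃ * m ^ β) := by
        rw [sum_add_distrib, mul_add]
        gcongr lam⁻¹ * (?_ + ?_)
        exacts [hincr a (hgrid _) t ht hta, hincr a (hgrid _) b (hgrid _) hba]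
    _ = 2 * √C₃ / lam * m ^ β := by ring

end
end

section
/- Suppose min_k π_k ≥ λ > 0, n · max_{k≠l} |Δ_{kl}| ≤ C₁, n ≤ N, and there are constants C₃ > 0 and β > 0 such that N^{-1} Σ_{k∈U} (Y_k(t) − Y_k(s))² ≤ C₃|t−s|^{2β} for all s,t ∈ [0,T]. Then there exists a constant C₇ depending only on λ, C₁ and C₃ such that, for all (s,t) ∈ [0,T] × [0,T], n · E[{μ̂_N(t) − μ_N(t) − μ̂_N(s) + μ_N(s)}²] ≤ C₇ |t−s|^{2β}. -/
open Finset MeasureTheory ProbabilityTheory Filter Topology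

noncomputable section

/-!
Each increment of the Horvitz–Thompson error is linear in the centred indicators `I_k - π_k`, with
weights `a_k = (Y_k(t) - Y_k(s)) / π_k`, so its second moment is the quadratic form
`N⁻² ∑_{k,l} a_k a_l Δ_{kl}`. The diagonal `Δ_{kk} = π_k (1 - π_k)` is at most `1` and `n` times
the off-diagonal entries is at most `C₁`, so by Cauchy–Schwarz `n` times the form is at most
`(n + C₁ N) N⁻² ∑_k a_k²`. Since `n ≤ N` and `π_k ≥ λ` this is at most
`(1 + C₁) λ⁻² N⁻¹ ∑_k (Y_k(t) - Y_k(s))²`, and the Hölder-type hypothesis bounds the last average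
by `C₃ |t - s|^{2β}`.
-/

section Design

variable {N n : ℕ} {p : Finset ℕ → ℝ}

lemma dExp_congr {f g : Finset ℕ → ℝ} (h : ∀ s, p s ≠ 0 → f s = g s) :
    dExp N p f = dExp N p g :=
  Finset.sum_congr rfl fun s _ => by
    by_cases hs : p s = 0
    · simp [hs]
    · rw [h s hs]

lemma dExp_add (f g : Finset ℕ → ℝ) :
    dExp N p (fun s => f s + g s) = dExp N p f + dExp N p g := by
  simp only [dExp, mul_add, Finset.sum_add_distrib]

lemma dExp_const_mul (c : ℝ) (f : Finset ℕ → ℝ) :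
    dExp N p (fun s => c * f s) = c * dExp N p f := by
  simp only [dExp, Finset.mul_sum, mul_left_comm]

lemma dExp_sum {ι : Type*} (A : Finset ι) (f : ι → Finset ℕ → ℝ) :
    dExp N p (fun s => ∑ k ∈ A, f k s) = ∑ k ∈ A, dExp N p (f k) := by
  simp only [dExp, Finset.mul_sum]
  exact Finset.sum_comm

lemma IsDesign.dExp_const (hp : IsDesign N n p) (c : ℝ) : dExp N p (fun _ => c) = c := by
  rw [dExp, ← Finset.sum_mul, hp.sum_one, one_mul]

lemma Delta_self_le_one (k : ℕ) : Delta N p k k ≤ 1 := by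
  have hdiag : pi2 N p k k = pi1 N p k := by simp only [pi2, pi1, and_self]
  rw [Delta, hdiag]
  nlinarith [sq_nonneg (pi1 N p k - 1 / 2)]

lemma IsDesign.dExp_centered_ind_mul (hp : IsDesign N n p) (k l : ℕ) :
    dExp N p (fun s => (ind k s - pi1 N p k) * (ind l s - pi1 N p l)) = Delta N p k l := by
  have hexpand : (fun s => (ind k s - pi1 N p k) * (ind l s - pi1 N p l)) = fun s =>
      (if k ∈ s ∧ l ∈ s then (1 : ℝ) else 0) +
        (-pi1 N p k * ind l s + (-pi1 N p l * ind k s + pi1 N p k * pi1 N p l)) := by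
    funext s
    by_cases hk : k ∈ s <;> by_cases hl : l ∈ s <;> simp [ind, hk, hl] <;> ring
  rw [hexpand]
  simp only [dExp_add, dExp_const_mul, hp.dExp_const]
  change pi2 N p k l + (-pi1 N p k * pi1 N p l + (-pi1 N p l * pi1 N p k + _)) = _
  rw [Delta]
  ring

lemma IsDesign.dExp_sq_sum_mul_centered_ind (hp : IsDesign N n p) (A : Finset ℕ) (a : ℕ → ℝ) :
    dExp N p (fun s => (∑ k ∈ A, a k * (ind k s - pi1 N p k)) ^ 2) =
      ∑ k ∈ A, ∑ l ∈ A, a k * a l * Delta N p k l := by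
  simp only [sq, Finset.sum_mul_sum, dExp_sum]
  refine Finset.sum_congr rfl fun k _ => Finset.sum_congr rfl fun l _ => ?_
  rw [← hp.dExp_centered_ind_mul, ← dExp_const_mul]
  congr 1
  funext s
  ring

lemma htMean_sub_popMean {Y : ℕ → ℝ → ℝ} {s : Finset ℕ} (hs : s ⊆ Finset.range N)
    (hπ : ∀ k ∈ Finset.range N, pi1 N p k ≠ 0) (t : ℝ) :
    htMean N p Y s t - popMean N Y t =
      (N : ℝ)⁻¹ * ∑ k ∈ Finset.range N, Y k t / pi1 N p k * (ind k s - pi1 N p k) := by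
  have hsample : ∑ k ∈ s, Y k t / pi1 N p k =
      ∑ k ∈ Finset.range N, Y k t / pi1 N p k * ind k s := by
    simp only [ind, mul_ite, mul_one, mul_zero]
    rw [Finset.sum_ite_mem, Finset.inter_eq_right.mpr hs]
  have hpop : ∑ k ∈ Finset.range N, Y k t =
      ∑ k ∈ Finset.range N, Y k t / pi1 N p k * pi1 N p k :=
    Finset.sum_congr rfl fun k hk => (div_mul_cancel₀ _ (hπ k hk)).symm
  rw [htMean, popMean, hsample, hpop, ← mul_sub, ← Finset.sum_sub_distrib]
  simp only [mul_sub]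

lemma htMean_increment {Y : ℕ → ℝ → ℝ} {s : Finset ℕ} (hs : s ⊆ Finset.range N)
    (hπ : ∀ k ∈ Finset.range N, pi1 N p k ≠ 0) (t u : ℝ) :
    htMean N p Y s t - popMean N Y t - htMean N p Y s u + popMean N Y u =
      (N : ℝ)⁻¹ * ∑ k ∈ Finset.range N, (Y k t - Y k u) / pi1 N p k * (ind k s - pi1 N p k) := by
  calc _ = (htMean N p Y s t - popMean N Y t) - (htMean N p Y s u - popMean N Y u) := by ring
    _ = _ := by
        rw [htMean_sub_popMean hs hπ, htMean_sub_popMean hs hπ, ← mul_sub,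
          ← Finset.sum_sub_distrib]
        simp only [sub_div, sub_mul]

lemma IsDesign.dExp_sq_htMean_increment (hp : IsDesign N n p) (Y : ℕ → ℝ → ℝ)
    (hπ : ∀ k ∈ Finset.range N, pi1 N p k ≠ 0) (t u : ℝ) :
    dExp N p (fun s => (htMean N p Y s t - popMean N Y t - htMean N p Y s u + popMean N Y u) ^ 2) =
      ((N : ℝ)⁻¹) ^ 2 * ∑ k ∈ Finset.range N, ∑ l ∈ Finset.range N,
        (Y k t - Y k u) / pi1 N p k * ((Y l t - Y l u) / pi1 N p l) * Delta N p k l := by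
  rw [dExp_congr fun s hs => by rw [htMean_increment (hp.supp s hs).1 hπ, mul_pow],
    dExp_const_mul, hp.dExp_sq_sum_mul_centered_ind]

end Design

lemma sum_sum_mul_mul_le_of_offDiag_abs_le {ι : Type*} [DecidableEq ι] {A : Finset ι}
    {a : ι → ℝ} {D : ι → ι → ℝ} {m c : ℝ} (hm : 0 ≤ m) (hc : 0 ≤ c)
    (hdiag : ∀ k ∈ A, D k k ≤ 1) (hoff : ∀ k ∈ A, ∀ l ∈ A, k ≠ l → m * |D k l| ≤ c) :
    m * ∑ k ∈ A, ∑ l ∈ A, a k * a l * D k l ≤ (m + c * A.card) * ∑ k ∈ A, a k ^ 2 := by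
  have hterm : ∀ k ∈ A, ∀ l ∈ A,
      m * (a k * a l * D k l) ≤ (if k = l then m * a k ^ 2 else 0) + c * (|a k| * |a l|) := by
    intro k hk l hl
    by_cases hkl : k = l
    · subst hkl
      rw [if_pos rfl]
      have hD := mul_le_mul_of_nonneg_left (hdiag k hk) (mul_nonneg hm (mul_self_nonneg (a k)))
      have hc' : 0 ≤ c * (|a k| * |a k|) := by positivity
      nlinarith
    · rw [if_neg hkl, zero_add]
      calc m * (a k * a l * D k l) = a k * a l * (m * D k l) := by ring
        _ ≤ |a k * a l * (m * D k l)| := le_abs_self _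
        _ = |a k| * |a l| * (m * |D k l|) := by rw [abs_mul, abs_mul, abs_mul, abs_of_nonneg hm]
        _ ≤ |a k| * |a l| * c := by gcongr; exact hoff k hk l hl hkl
        _ = c * (|a k| * |a l|) := by ring
  have hcs : (∑ k ∈ A, |a k|) ^ 2 ≤ A.card * ∑ k ∈ A, a k ^ 2 := by
    simpa only [sq_abs] using sq_sum_le_card_mul_sum_sq (s := A) (f := fun k => |a k|)
  calc m * ∑ k ∈ A, ∑ l ∈ A, a k * a l * D k l
      ≤ ∑ k ∈ A, ∑ l ∈ A, ((if k = l then m * a k ^ 2 else 0) + c * (|a k| * |a l|)) := by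
        simp only [Finset.mul_sum]
        exact Finset.sum_le_sum fun k hk => Finset.sum_le_sum fun l hl => hterm k hk l hl
    _ = m * ∑ k ∈ A, a k ^ 2 + c * (∑ k ∈ A, |a k|) ^ 2 := by
        rw [Finset.sum_congr rfl fun k hk => by rw [Finset.sum_add_distrib, Finset.sum_ite_eq,
          if_pos hk], Finset.sum_add_distrib, Finset.mul_sum, sq, Finset.sum_mul_sum]
        simp only [Finset.mul_sum]
    _ ≤ (m + c * A.card) * ∑ k ∈ A, a k ^ 2 := by nlinarith

lemma sum_div_sq_le_sum_sq_div {ι : Type*} {A : Finset ι} {z w : ι → ℝ} {lam : ℝ} (hlam : 0 < lam)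
    (hw : ∀ k ∈ A, lam ≤ w k) : ∑ k ∈ A, (z k / w k) ^ 2 ≤ (∑ k ∈ A, z k ^ 2) / lam ^ 2 := by
  rw [Finset.sum_div]
  refine Finset.sum_le_sum fun k hk => ?_
  rw [div_pow]
  gcongr
  exact hw k hk

/-- second-moment (variance) bound for the increments of the
Horvitz–Thompson estimator: there is a constant `C₇` depending only on `λ`, `C₁`, `C₃`
with `n · E[(μ̂_N(t) - μ_N(t) - μ̂_N(s) + μ_N(s))²] ≤ C₇ |t-s|^{2β}`. -/
theorem increment_variance_bound (lam C₁ C₃ : ℝ) (hlam : 0 < lam) (hC₁ : 0 < C₁)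
    (hC₃ : 0 < C₃) :
    ∃ C₇ : ℝ, 0 < C₇ ∧
      ∀ (T : ℝ), 0 < T → ∀ (β : ℝ), 0 < β →
      ∀ (N n : ℕ) (Y : ℕ → ℝ → ℝ) (p : Finset ℕ → ℝ), IsDesign N n p → n ≤ N →
      (∀ k, ContinuousOn (Y k) (Set.Icc 0 T)) →
      (∀ k ∈ Finset.range N, lam ≤ pi1 N p k) →
      (∀ k ∈ Finset.range N, ∀ l ∈ Finset.range N, k ≠ l →
        (n : ℝ) * |Delta N p k l| ≤ C₁) →
      (∀ s ∈ Set.Icc (0 : ℝ) T, ∀ t ∈ Set.Icc (0 : ℝ) T,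
        (N : ℝ)⁻¹ * ∑ k ∈ Finset.range N, (Y k t - Y k s) ^ 2 ≤ C₃ * |t - s| ^ (2 * β)) →
      ∀ s ∈ Set.Icc (0 : ℝ) T, ∀ t ∈ Set.Icc (0 : ℝ) T,
        (n : ℝ) * dExp N p (fun sam =>
            (htMean N p Y sam t - popMean N Y t - htMean N p Y sam s + popMean N Y s) ^ 2)
          ≤ C₇ * |t - s| ^ (2 * β) := by
  refine ⟨(1 + C₁) * C₃ / lam ^ 2, by positivity, ?_⟩
  intro T _ β _ N n Y p hp hnN _ hπ hΔ hincr s hs t ht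
  set a : ℕ → ℝ := fun k => (Y k t - Y k s) / pi1 N p k
  set S := ∑ k ∈ Finset.range N, (Y k t - Y k s) ^ 2
  have hπ0 : ∀ k ∈ Finset.range N, pi1 N p k ≠ 0 := fun k hk => (hlam.trans_le (hπ k hk)).ne'
  have hquad : (n : ℝ) * ∑ k ∈ Finset.range N, ∑ l ∈ Finset.range N, a k * a l * Delta N p k l ≤
      (N + C₁ * N) * (S / lam ^ 2) := by
    have hform := sum_sum_mul_mul_le_of_offDiag_abs_le (a := a) (Nat.cast_nonneg n) hC₁.le
      (fun k _ => Delta_self_le_one k) hΔ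
    have hweights : ∑ k ∈ Finset.range N, a k ^ 2 ≤ S / lam ^ 2 :=
      sum_div_sq_le_sum_sq_div hlam hπ
    rw [Finset.card_range] at hform
    refine hform.trans ?_
    gcongr
  have hNinv : ((N : ℝ)⁻¹) ^ 2 * N = (N : ℝ)⁻¹ := by
    rcases eq_or_ne (N : ℝ) 0 with hN | hN <;> field_simp [hN]
  calc (n : ℝ) * dExp N p _
      = ((N : ℝ)⁻¹) ^ 2 * (n * ∑ k ∈ Finset.range N, ∑ l ∈ Finset.range N,
          a k * a l * Delta N p k l) := by rw [hp.dExp_sq_htMean_increment Y hπ0]; ring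
    _ ≤ ((N : ℝ)⁻¹) ^ 2 * ((N + C₁ * N) * (S / lam ^ 2)) := by gcongr
    _ = (1 + C₁) / lam ^ 2 * ((N : ℝ)⁻¹ * S) := by
        linear_combination (1 + C₁) / lam ^ 2 * S * hNinv
    _ ≤ (1 + C₁) / lam ^ 2 * (C₃ * |t - s| ^ (2 * β)) :=
        mul_le_mul_of_nonneg_left (hincr s hs t ht) (by positivity)
    _ = (1 + C₁) * C₃ / lam ^ 2 * |t - s| ^ (2 * β) := by ring

end
end
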